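/- arXiv:2112.13932 — 3 statements merged into one kernel-verified Lean document; each statement's English description precedes it below -/
import Mathlib

section
/- Consider the linear regression setup and the bootstrap estimate β̂*_n = (X_nᵀX_n)⁻¹X_nᵀ(X_n β̂_n + ε*_n), where ε*_n has components i.i.d. from the centered empirical distribution F̂_n of the estimated residuals. Then there exists a constant η > 0 such that E exp(η ‖β̂*_n‖^α) < ∞, where ‖·‖ is the Euclidean norm on ℝ^p; i.e. the norm of the bootstrap estimate has α-sub-exponential tails. -/
open MeasureTheory Matrix
open scoped ENNReal NNReal BigOperators

noncomputable section

/-- Euclidean norm on `Fin d → ℝ`. -/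
def euclNorm {d : ℕ} (v : Fin d → ℝ) : ℝ := Real.sqrt (∑ i, v i ^ 2)

/-- `q`-Wasserstein distance between measures on `Fin d → ℝ` (Euclidean norm cost). -/
def wassE (q : ℝ) {d : ℕ} (μ ν : Measure (Fin d → ℝ)) : ℝ :=
  sInf { r : ℝ | ∃ γ : Measure ((Fin d → ℝ) × (Fin d → ℝ)),
    γ.map Prod.fst = μ ∧ γ.map Prod.snd = ν ∧
    r = (∫ z, euclNorm (z.1 - z.2) ^ q ∂γ) ^ (1 / q) }

/-- `q`-Wasserstein distance between measures on `ℝ`. -/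
def wassR (q : ℝ) (μ ν : Measure ℝ) : ℝ :=
  sInf { r : ℝ | ∃ γ : Measure (ℝ × ℝ),
    γ.map Prod.fst = μ ∧ γ.map Prod.snd = ν ∧
    r = (∫ z, |z.1 - z.2| ^ q ∂γ) ^ (1 / q) }

/-- Empirical measure of `k` points. -/
def empMeasure {E : Type*} [MeasurableSpace E] {k : ℕ} (pts : Fin k → E) : Measure E :=
  (k : ℝ≥0∞)⁻¹ • ∑ i, Measure.dirac (pts i)

instance empMeasure.instIsFiniteMeasure {E : Type*} [MeasurableSpace E] {k : ℕ}
    (pts : Fin k → E) : IsFiniteMeasure (empMeasure pts) := by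
  constructor
  have h : (∑ i, Measure.dirac (pts i)) Set.univ = (k : ℝ≥0∞) := by
    simp [Measure.finset_sum_apply]
  rw [empMeasure, Measure.smul_apply, h, smul_eq_mul]
  by_cases hk : k = 0
  · subst hk; simp
  · rw [ENNReal.inv_mul_cancel (by exact_mod_cast hk) (ENNReal.natCast_ne_top k)]
    exact ENNReal.one_lt_top

/-- Spectral norm (operator norm w.r.t. Euclidean norms). -/
def specNorm {m n : ℕ} (A : Matrix (Fin m) (Fin n) ℝ) : ℝ :=
  ‖LinearMap.toContinuousLinearMap (Matrix.toEuclideanLin A)‖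

/-- Orlicz (quasi-)norm of order `α` of the identity under a distribution `F` on `ℝ`. -/
def orlicz (α : ℝ) (F : Measure ℝ) : ℝ :=
  sInf { t : ℝ | 0 < t ∧ ∫ x, Real.exp ((|x| / t) ^ α) ∂F ≤ 2 }

/-- The OLS map `(XᵀX)⁻¹Xᵀ`. -/
def olsM {n p : ℕ} (X : Matrix (Fin n) (Fin p) ℝ) : Matrix (Fin p) (Fin n) ℝ :=
  (Xᵀ * X)⁻¹ * Xᵀ

/-- Center a vector by subtracting the mean of its entries. -/
def center {n : ℕ} (v : Fin n → ℝ) : Fin n → ℝ := fun i => v i - (∑ j, v j) / n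

/-- Projection onto the column space of `X`. -/
def projMat {n p : ℕ} (X : Matrix (Fin n) (Fin p) ℝ) : Matrix (Fin n) (Fin n) ℝ :=
  X * (Xᵀ * X)⁻¹ * Xᵀ

/-- The matrix `(1/n)𝟙𝟙ᵀ + Π`. -/
def covMat {n p : ℕ} (X : Matrix (Fin n) (Fin p) ℝ) : Matrix (Fin n) (Fin n) ℝ :=
  (n : ℝ)⁻¹ • Matrix.of (fun _ _ => (1 : ℝ)) + projMat X

/-- Uniform distribution on `Fin n`. -/
def unifFin (n : ℕ) : Measure (Fin n) := empMeasure (fun i : Fin n => i)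

namespace Stmt1Aux


def s1 {d : ℕ} (v : Fin d → ℝ) : ℝ := ∑ i, |v i|

lemma s1_def {d : ℕ} (v : Fin d → ℝ) : s1 v = ∑ i, |v i| := rfl

lemma s1_nonneg {d : ℕ} (v : Fin d → ℝ) : 0 ≤ s1 v :=
  Finset.sum_nonneg fun _ _ => abs_nonneg _

lemma euclNorm_nonneg {d : ℕ} (v : Fin d → ℝ) : 0 ≤ euclNorm v := Real.sqrt_nonneg _

lemma euclNorm_le_s1 {d : ℕ} (v : Fin d → ℝ) : euclNorm v ≤ s1 v := by
  have h1 : ∑ i, v i ^ 2 = ∑ i, |v i| ^ 2 := by simp [sq_abs]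
  have h2 : ∑ i, |v i| ^ 2 ≤ (∑ i, |v i|) ^ 2 :=
    Finset.sum_sq_le_sq_sum_of_nonneg fun i _ => abs_nonneg _
  calc euclNorm v = Real.sqrt (∑ i, |v i| ^ 2) := by rw [euclNorm, h1]
    _ ≤ Real.sqrt ((∑ i, |v i|) ^ 2) := Real.sqrt_le_sqrt h2
    _ = s1 v := Real.sqrt_sq (s1_nonneg v)

lemma s1_add_le {d : ℕ} (v w : Fin d → ℝ) : s1 (v + w) ≤ s1 v + s1 w := by
  rw [s1, s1, s1, ← Finset.sum_add_distrib]
  exact Finset.sum_le_sum fun i _ => abs_add_le _ _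

lemma s1_sub_le {d : ℕ} (v w : Fin d → ℝ) : s1 (v - w) ≤ s1 v + s1 w := by
  rw [s1, s1, s1, ← Finset.sum_add_distrib]
  exact Finset.sum_le_sum fun i _ => (abs_sub _ _)

lemma s1_mulVec_le {m k : ℕ} (A : Matrix (Fin m) (Fin k) ℝ) (v : Fin k → ℝ) :
    s1 (A.mulVec v) ≤ (∑ i, ∑ j, |A i j|) * s1 v := by
  have h1 : ∀ i, |(A.mulVec v) i| ≤ ∑ j, |A i j| * |v j| := by
    intro i
    rw [Matrix.mulVec, dotProduct]
    exact (Finset.abs_sum_le_sum_abs _ _).trans (by simp [abs_mul, le_refl])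
  calc s1 (A.mulVec v) ≤ ∑ i, ∑ j, |A i j| * |v j| := Finset.sum_le_sum fun i _ => h1 i
    _ ≤ ∑ i, ∑ j, |A i j| * s1 v := by
        refine Finset.sum_le_sum fun i _ => Finset.sum_le_sum fun j _ => ?_
        exact mul_le_mul_of_nonneg_left
          (Finset.single_le_sum (fun l _ => abs_nonneg (v l)) (Finset.mem_univ j))
          (abs_nonneg _)
    _ = (∑ i, ∑ j, |A i j|) * s1 v := by rw [Finset.sum_mul]; simp [Finset.sum_mul]

lemma abs_center_le {n : ℕ} (hn : 0 < n) (v : Fin n → ℝ) (i : Fin n) :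
    |center v i| ≤ 2 * s1 v := by
  have h1 : |∑ j, v j| ≤ s1 v := Finset.abs_sum_le_sum_abs _ _
  have h2 : |(∑ j, v j) / (n:ℝ)| ≤ s1 v := by
    rw [abs_div, abs_of_nonneg (by positivity : (0:ℝ) ≤ (n:ℝ))]
    have hn1 : (1:ℝ) ≤ (n:ℝ) := by exact_mod_cast hn
    calc |∑ j, v j| / (n:ℝ) ≤ |∑ j, v j| / 1 := by
          apply div_le_div_of_nonneg_left (abs_nonneg _) one_pos hn1
      _ = |∑ j, v j| := by rw [div_one]
      _ ≤ s1 v := h1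
  have h3 : |v i| ≤ s1 v := Finset.single_le_sum (fun l _ => abs_nonneg (v l)) (Finset.mem_univ i)
  calc |center v i| = |v i - (∑ j, v j) / n| := rfl
    _ ≤ |v i| + |(∑ j, v j) / (n:ℝ)| := abs_sub _ _
    _ ≤ 2 * s1 v := by linarith


def bstarFun {n p : ℕ} (X : Matrix (Fin n) (Fin p) ℝ) (β : Fin p → ℝ)
    (e : Fin n → ℝ) (idx : Fin n → Fin n) : Fin p → ℝ :=
  (olsM X).mulVec (X.mulVec ((olsM X).mulVec (X.mulVec β + e)) +
    fun j => center ((X.mulVec β + e) - X.mulVec ((olsM X).mulVec (X.mulVec β + e))) (idx j))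

lemma s1_center_comp_le {n : ℕ} (hn : 0 < n) (v : Fin n → ℝ) (idx : Fin n → Fin n) :
    s1 (fun j => center v (idx j)) ≤ 2 * n * s1 v := by
  rw [s1_def]
  calc ∑ j, |center v (idx j)| ≤ ∑ _j : Fin n, 2 * s1 v :=
        Finset.sum_le_sum fun j _ => abs_center_le hn v (idx j)
    _ = 2 * n * s1 v := by
        rw [Finset.sum_const, Finset.card_univ, Fintype.card_fin, nsmul_eq_mul]; ring

lemma chain_bound {n p : ℕ} (hn : 0 < n) (A : Matrix (Fin p) (Fin n) ℝ)
    (X : Matrix (Fin n) (Fin p) ℝ) (β : Fin p → ℝ) :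
    ∃ C0 C1 : ℝ, 0 ≤ C0 ∧ 0 ≤ C1 ∧ ∀ (e : Fin n → ℝ) (idx : Fin n → Fin n),
      euclNorm (A.mulVec (X.mulVec (A.mulVec (X.mulVec β + e)) +
        fun j => center ((X.mulVec β + e) - X.mulVec (A.mulVec (X.mulVec β + e))) (idx j)))
        ≤ C0 + C1 * ∑ i, |e i| := by
  set S := ∑ i, ∑ j, |A i j| with hS
  set SX := ∑ i, ∑ j, |X i j| with hSX
  have hS0 : 0 ≤ S := Finset.sum_nonneg fun i _ => Finset.sum_nonneg fun j _ => abs_nonneg _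
  have hSX0 : 0 ≤ SX := Finset.sum_nonneg fun i _ => Finset.sum_nonneg fun j _ => abs_nonneg _
  set b0 := s1 (X.mulVec β) with hb0
  have hb00 : 0 ≤ b0 := s1_nonneg _
  have hn0 : (0:ℝ) ≤ (n:ℝ) := Nat.cast_nonneg n
  have hP : 0 ≤ S*(SX*S + 2*n*(1+SX*S)) := by
    have h1 : 0 ≤ SX*S := mul_nonneg hSX0 hS0
    have h2 : 0 ≤ 2*(n:ℝ)*(1+SX*S) := by nlinarith
    nlinarith
  refine ⟨S*(SX*S + 2*n*(1+SX*S))*b0, S*(SX*S + 2*n*(1+SX*S)), mul_nonneg hP hb00, hP, ?_⟩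
  intro e idx
  set E := s1 e with hE
  have hE0 : 0 ≤ E := s1_nonneg _
  set y : Fin n → ℝ := X.mulVec β + e with hy
  set bh : Fin p → ℝ := A.mulVec y with hbh
  set rh : Fin n → ℝ := y - X.mulVec bh with hrh
  have h_y : s1 y ≤ b0 + E := s1_add_le _ _
  have h_bh : s1 bh ≤ S * (b0 + E) :=
    (s1_mulVec_le _ _).trans (mul_le_mul_of_nonneg_left h_y hS0)
  have h_Xb : s1 (X.mulVec bh) ≤ SX * (S * (b0 + E)) :=
    (s1_mulVec_le _ _).trans (mul_le_mul_of_nonneg_left h_bh hSX0)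
  have h_rh : s1 rh ≤ (b0 + E) + SX * (S * (b0 + E)) :=
    (s1_sub_le _ _).trans (add_le_add h_y h_Xb)
  have h_es : s1 (fun j => center rh (idx j)) ≤ 2 * n * ((b0 + E) + SX * (S * (b0 + E))) :=
    (s1_center_comp_le hn rh idx).trans
      (by apply mul_le_mul_of_nonneg_left h_rh; nlinarith)
  have h_in : s1 (X.mulVec bh + fun j => center rh (idx j)) ≤
      SX * (S * (b0 + E)) + 2 * n * ((b0 + E) + SX * (S * (b0 + E))) :=
    (s1_add_le _ _).trans (add_le_add h_Xb h_es)
  have hEe : E = ∑ i, |e i| := by rw [hE, s1_def]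
  calc euclNorm (A.mulVec (X.mulVec bh + fun j => center rh (idx j)))
      ≤ s1 (A.mulVec (X.mulVec bh + fun j => center rh (idx j))) := euclNorm_le_s1 _
    _ ≤ S * s1 (X.mulVec bh + fun j => center rh (idx j)) := s1_mulVec_le _ _
    _ ≤ S * (SX * (S * (b0 + E)) + 2 * n * ((b0 + E) + SX * (S * (b0 + E)))) :=
        mul_le_mul_of_nonneg_left h_in hS0
    _ = S*(SX*S + 2*n*(1+SX*S))*b0 + S*(SX*S + 2*n*(1+SX*S)) * E := by ring
    _ = _ := by rw [hEe]

lemma two_rpow_bound {α : ℝ} (hα : 0 ≤ α) {x y : ℝ} (hx : 0 ≤ x) (hy : 0 ≤ y) :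
    (x + y) ^ α ≤ 2 ^ α * (x ^ α + y ^ α) := by
  have h1 : x + y ≤ 2 * max x y := by
    have := le_max_left x y; have := le_max_right x y; linarith
  have hm : 0 ≤ max x y := le_max_of_le_left hx
  calc (x + y) ^ α ≤ (2 * max x y) ^ α := Real.rpow_le_rpow (by linarith) h1 hα
    _ = 2 ^ α * (max x y) ^ α := Real.mul_rpow (by norm_num) hm
    _ ≤ 2 ^ α * (x ^ α + y ^ α) := by
        apply mul_le_mul_of_nonneg_left _ (Real.rpow_nonneg (by norm_num) α)
        rcases max_cases x y with ⟨h, _⟩ | ⟨h, _⟩ <;> rw [h]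
        · exact le_add_of_nonneg_right (Real.rpow_nonneg hy α)
        · exact le_add_of_nonneg_left (Real.rpow_nonneg hx α)

lemma bstar_bound {n p : ℕ} (hn : 0 < n) (X : Matrix (Fin n) (Fin p) ℝ) (β : Fin p → ℝ) :
    ∃ C0 C1 : ℝ, 0 ≤ C0 ∧ 0 ≤ C1 ∧ ∀ (e : Fin n → ℝ) (idx : Fin n → Fin n),
      euclNorm (bstarFun X β e idx) ≤ C0 + C1 * ∑ i, |e i| :=
  chain_bound hn (olsM X) X β

lemma pow_bound {n : ℕ} (hn : 0 < n) (α : ℝ) (hα : 1 ≤ α) (C0 C1 : ℝ)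
    (hC0 : 0 ≤ C0) (hC1 : 0 ≤ C1) :
    ∃ D0 D1 : ℝ, 0 ≤ D0 ∧ 0 ≤ D1 ∧ ∀ e : Fin n → ℝ,
      (C0 + C1 * ∑ i, |e i|) ^ α ≤ D0 + D1 * ∑ i, |e i| ^ α := by
  have hα0 : 0 ≤ α := by linarith
  refine ⟨(n:ℝ)^α * 2^α * (C0/n)^α, (n:ℝ)^α * 2^α * C1^α, by positivity, by positivity, ?_⟩
  intro e
  set f : Fin n → ℝ := fun i => C0/n + C1 * |e i| with hf
  have hf0 : ∀ i, 0 ≤ f i := fun i => by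
    have : 0 ≤ C0 / n := by positivity
    have : 0 ≤ C1 * |e i| := by positivity
    simp only [hf]; linarith
  obtain ⟨i0, -, hmax⟩ := Finset.exists_max_image Finset.univ f ⟨⟨0, hn⟩, Finset.mem_univ _⟩
  have h1 : C0 + C1 * ∑ i, |e i| = ∑ i, f i := by
    simp only [hf, Finset.sum_add_distrib, Finset.sum_const, Finset.card_univ, Fintype.card_fin,
      nsmul_eq_mul, ← Finset.mul_sum]
    rw [mul_div_cancel₀]
    exact_mod_cast hn.ne'
  have h2 : ∑ i, f i ≤ (n:ℝ) * f i0 := by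
    have := Finset.sum_le_card_nsmul Finset.univ f (f i0) fun i _ => hmax i (Finset.mem_univ i)
    simpa [Finset.card_univ, nsmul_eq_mul] using this
  have hsum0 : 0 ≤ ∑ i, f i := Finset.sum_nonneg fun i _ => hf0 i
  have h3 : |e i0| ^ α ≤ ∑ i, |e i| ^ α :=
    Finset.single_le_sum (fun i _ => Real.rpow_nonneg (abs_nonneg _) α) (Finset.mem_univ i0)
  calc (C0 + C1 * ∑ i, |e i|) ^ α = (∑ i, f i) ^ α := by rw [h1]
    _ ≤ ((n:ℝ) * f i0) ^ α := Real.rpow_le_rpow hsum0 h2 hα0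
    _ = (n:ℝ)^α * (f i0)^α := Real.mul_rpow (by positivity) (hf0 i0)
    _ ≤ (n:ℝ)^α * (2^α * ((C0/n)^α + (C1 * |e i0|)^α)) := by
        apply mul_le_mul_of_nonneg_left _ (Real.rpow_nonneg (by positivity) α)
        exact two_rpow_bound hα0 (by positivity) (by positivity)
    _ = (n:ℝ)^α * 2^α * (C0/n)^α + (n:ℝ)^α * 2^α * (C1^α * |e i0|^α) := by
        rw [Real.mul_rpow hC1 (abs_nonneg _)]; ring
    _ ≤ (n:ℝ)^α * 2^α * (C0/n)^α + (n:ℝ)^α * 2^α * C1^α * (∑ i, |e i| ^ α) := by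
        have hc : 0 ≤ (n:ℝ)^α * 2^α * C1^α := by positivity
        nlinarith [mul_le_mul_of_nonneg_left h3 hc]
    _ = _ := by ring_nf

lemma tail_lint (F : Measure ℝ) [IsProbabilityMeasure F] (α K : ℝ) (hα : 1 ≤ α) (hK : 0 < K)
    (htail : ∀ t : ℝ, 0 ≤ t →
      F {x : ℝ | t < |x|} ≤ ENNReal.ofReal (2 * Real.exp (-(t ^ α / K ^ α))))
    (c : ℝ) (hc0 : 0 ≤ c) (hc : c * 2 ^ α ≤ (2 * (2 ^ α * K ^ α))⁻¹) :
    ∫⁻ x, ENNReal.ofReal (Real.exp (c * |x| ^ α)) ∂F < ⊤ := by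
  have hα0 : 0 ≤ α := by linarith
  have h2α : (0:ℝ) < 2 ^ α := Real.rpow_pos_of_pos two_pos α
  have hKα : (0:ℝ) < K ^ α := Real.rpow_pos_of_pos hK α
  set d : ℝ := (2 * (2 ^ α * K ^ α))⁻¹ with hd
  have hd0 : 0 < d := by rw [hd]; positivity
  set A : ℕ → Set ℝ := fun k => {x : ℝ | (k:ℝ) ≤ |x| ∧ |x| < (k:ℝ) + 1} with hA
  have hAmeas : ∀ k, MeasurableSet (A k) := by
    intro k
    have : A k = abs ⁻¹' (Set.Ico (k:ℝ) ((k:ℝ)+1)) := rfl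
    rw [this]
    exact (continuous_abs.measurable) measurableSet_Ico
  set B : ℕ → ℝ≥0∞ := fun k => ENNReal.ofReal (Real.exp (c * ((k:ℝ) + 1) ^ α)) with hB
  -- pointwise bound
  have hpt : ∀ x : ℝ, ENNReal.ofReal (Real.exp (c * |x| ^ α)) ≤
      ∑' k, Set.indicator (A k) (fun _ => B k) x := by
    intro x
    have hxa : (0:ℝ) ≤ |x| := abs_nonneg x
    set k := ⌊|x|⌋₊ with hk
    have hmem : x ∈ A k := ⟨Nat.floor_le hxa, Nat.lt_floor_add_one _⟩
    have hle : ENNReal.ofReal (Real.exp (c * |x| ^ α)) ≤ B k := by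
      apply ENNReal.ofReal_le_ofReal
      apply Real.exp_le_exp.2
      apply mul_le_mul_of_nonneg_left _ hc0
      exact Real.rpow_le_rpow hxa (le_of_lt (Nat.lt_floor_add_one _)) hα0
    calc ENNReal.ofReal (Real.exp (c * |x| ^ α)) ≤ B k := hle
      _ = Set.indicator (A k) (fun _ => B k) x := by rw [Set.indicator_of_mem hmem]
      _ ≤ ∑' k, Set.indicator (A k) (fun _ => B k) x := ENNReal.le_tsum k
  -- term bound
  set M : ℝ≥0∞ := ENNReal.ofReal (2 * Real.exp (c * 2 ^ α)) with hM
  set r : ℝ≥0∞ := ENNReal.ofReal (Real.exp (-d)) with hr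
  have hr1 : r < 1 := by
    rw [hr]
    rw [show (1:ℝ≥0∞) = ENNReal.ofReal 1 by simp]
    exact (ENNReal.ofReal_lt_ofReal_iff one_pos).2 (Real.exp_lt_one_iff.2 (by linarith))
  have hterm : ∀ k : ℕ, B k * F (A k) ≤ M * r ^ k := by
    intro k
    rcases Nat.eq_zero_or_pos k with hk0 | hk1
    · subst hk0
      have h1 : B 0 * F (A 0) ≤ B 0 * 1 := by
        apply mul_le_mul_of_nonneg_left _ (zero_le)
        exact prob_le_one
      have h2 : B 0 ≤ M := by
        rw [hB, hM]
        apply ENNReal.ofReal_le_ofReal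
        have hcc : c * ((0:ℕ)+1:ℝ) ^ α ≤ c * 2 ^ α := by
          apply mul_le_mul_of_nonneg_left _ hc0
          rw [show (((0:ℕ):ℝ) + 1) = (1:ℝ) by norm_num, Real.one_rpow]
          exact Real.one_le_rpow one_le_two hα0
        calc Real.exp (c * (((0:ℕ):ℝ)+1) ^ α) ≤ Real.exp (c * 2 ^ α) := Real.exp_le_exp.2 hcc
          _ ≤ 2 * Real.exp (c * 2 ^ α) := by nlinarith [Real.exp_pos (c * 2 ^ α)]
      calc B 0 * F (A 0) ≤ B 0 * 1 := h1
        _ = B 0 := mul_one _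
        _ ≤ M := h2
        _ = M * r ^ 0 := by rw [pow_zero, mul_one]
    · -- k ≥ 1
      have hkr : (1:ℝ) ≤ (k:ℝ) := by exact_mod_cast hk1
      have hFA : F (A k) ≤ ENNReal.ofReal (2 * Real.exp (-(((k:ℝ)/2) ^ α / K ^ α))) := by
        refine le_trans (measure_mono ?_) (htail ((k:ℝ)/2) (by positivity))
        intro x hx
        have : (k:ℝ) ≤ |x| := hx.1
        have : (k:ℝ)/2 < (k:ℝ) := by linarith
        exact lt_of_lt_of_le this hx.1
      have hreal : Real.exp (c * ((k:ℝ)+1) ^ α) * (2 * Real.exp (-(((k:ℝ)/2) ^ α / K ^ α)))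
          ≤ (2 * Real.exp (c * 2 ^ α)) * (Real.exp (-d)) ^ k := by
        rw [← Real.exp_nat_mul]
        have lhs_eq : Real.exp (c * ((k:ℝ)+1) ^ α) * (2 * Real.exp (-(((k:ℝ)/2) ^ α / K ^ α)))
            = 2 * Real.exp (c * ((k:ℝ)+1) ^ α + -(((k:ℝ)/2) ^ α / K ^ α)) := by
          rw [Real.exp_add]; ring
        have rhs_eq : 2 * Real.exp (c * 2 ^ α) * Real.exp ((k:ℝ) * -d)
            = 2 * Real.exp (c * 2 ^ α + (k:ℝ) * -d) := by
          rw [Real.exp_add]; ring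
        rw [lhs_eq, rhs_eq]
        apply mul_le_mul_of_nonneg_left _ (by norm_num)
        apply Real.exp_le_exp.2
        -- c(k+1)^α - (k/2)^α/K^α ≤ c·2^α + k·(-d)
        have e1 : ((k:ℝ)+1) ^ α ≤ 2 ^ α * (k:ℝ) ^ α := by
          rw [← Real.mul_rpow (by norm_num) (by linarith)]
          exact Real.rpow_le_rpow (by linarith) (by linarith) hα0
        have e2 : ((k:ℝ)/2) ^ α / K ^ α = (k:ℝ) ^ α * (2 ^ α * K ^ α)⁻¹ := by
          rw [Real.div_rpow (by linarith) (by norm_num)]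
          field_simp
        have e3 : (k:ℝ) ≤ (k:ℝ) ^ α := by
          calc (k:ℝ) = (k:ℝ) ^ (1:ℝ) := (Real.rpow_one _).symm
            _ ≤ (k:ℝ) ^ α := Real.rpow_le_rpow_of_exponent_le hkr hα
        have e4 : c * ((k:ℝ)+1) ^ α ≤ c * 2 ^ α * (k:ℝ) ^ α := by
          calc c * ((k:ℝ)+1) ^ α ≤ c * (2 ^ α * (k:ℝ) ^ α) := mul_le_mul_of_nonneg_left e1 hc0
            _ = c * 2 ^ α * (k:ℝ) ^ α := by ring
        have hkα0 : (0:ℝ) ≤ (k:ℝ) ^ α := Real.rpow_nonneg (by linarith) α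
        have e5 : c * 2 ^ α * (k:ℝ) ^ α - (k:ℝ) ^ α * (2 ^ α * K ^ α)⁻¹ ≤ - (d * (k:ℝ) ^ α) := by
          have h2d : (2 ^ α * K ^ α)⁻¹ = 2 * d := by rw [hd]; field_simp
          have : c * 2 ^ α ≤ d := hc
          nlinarith
        have e6 : - (d * (k:ℝ) ^ α) ≤ - (d * (k:ℝ)) := by nlinarith
        have hc2α : 0 ≤ c * 2 ^ α := by positivity
        calc c * ((k:ℝ)+1) ^ α + -(((k:ℝ)/2) ^ α / K ^ α)
            = c * ((k:ℝ)+1) ^ α - ((k:ℝ)/2) ^ α / K ^ α := by ring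
          _ ≤ c * 2 ^ α * (k:ℝ) ^ α - (k:ℝ) ^ α * (2 ^ α * K ^ α)⁻¹ := by rw [e2]; linarith
          _ ≤ - (d * (k:ℝ)) := le_trans e5 e6
          _ ≤ c * 2 ^ α + (k:ℝ) * -d := by nlinarith
      calc B k * F (A k) ≤ B k * ENNReal.ofReal (2 * Real.exp (-(((k:ℝ)/2) ^ α / K ^ α))) :=
            mul_le_mul_of_nonneg_left hFA (zero_le)
        _ = ENNReal.ofReal (Real.exp (c * ((k:ℝ)+1) ^ α) *
              (2 * Real.exp (-(((k:ℝ)/2) ^ α / K ^ α)))) := by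
            rw [hB, ← ENNReal.ofReal_mul (Real.exp_nonneg _)]
        _ ≤ ENNReal.ofReal ((2 * Real.exp (c * 2 ^ α)) * (Real.exp (-d)) ^ k) :=
            ENNReal.ofReal_le_ofReal hreal
        _ = M * r ^ k := by
            rw [hM, hr, ENNReal.ofReal_mul (by positivity), ENNReal.ofReal_pow (Real.exp_nonneg _)]
  -- put together
  calc ∫⁻ x, ENNReal.ofReal (Real.exp (c * |x| ^ α)) ∂F
      ≤ ∫⁻ x, ∑' k, Set.indicator (A k) (fun _ => B k) x ∂F := lintegral_mono hpt
    _ = ∑' k, ∫⁻ x, Set.indicator (A k) (fun _ => B k) x ∂F := by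
        rw [lintegral_tsum]
        intro k
        exact (measurable_const.indicator (hAmeas k)).aemeasurable
    _ = ∑' k, B k * F (A k) := by
        congr 1; funext k; exact lintegral_indicator_const (hAmeas k) (B k)
    _ ≤ ∑' k, M * r ^ k := ENNReal.tsum_le_tsum hterm
    _ = M * (1 - r)⁻¹ := by rw [ENNReal.tsum_mul_left, ENNReal.tsum_geometric]
    _ < ⊤ := by
        apply ENNReal.mul_lt_top ENNReal.ofReal_lt_top
        exact ENNReal.inv_lt_top.2 (tsub_pos_of_lt hr1)

lemma lintegral_pi_prod {E : Type*} [MeasurableSpace E] (μ : Measure E) [SigmaFinite μ]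
    (g : E → ℝ≥0∞) (hg : Measurable g) :
    ∀ n : ℕ, ∫⁻ v : Fin n → E, ∏ i, g (v i) ∂(Measure.pi fun _ => μ)
      = (∫⁻ x, g x ∂μ) ^ n := by
  intro n
  induction n with
  | zero =>
      simp only [Finset.univ_eq_empty, Finset.prod_empty, pow_zero, lintegral_one]
      rw [Measure.pi_univ]; simp
  | succ n ih =>
      have hmp := (measurePreserving_piFinSuccAbove (fun _ : Fin (n+1) => μ) 0).symm
      have hgp : Measurable fun v : Fin (n+1) → E => ∏ i, g (v i) :=
        Finset.measurable_prod _ fun i _ => hg.comp (measurable_pi_apply i)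
      rw [← hmp.lintegral_comp hgp]
      have key : ∀ a : E × (Fin n → E),
          ∏ i : Fin (n+1), g ((MeasurableEquiv.piFinSuccAbove (fun _ : Fin (n+1) => E) 0).symm a i)
            = g a.1 * ∏ i : Fin n, g (a.2 i) := by
        intro a
        simp [MeasurableEquiv.piFinSuccAbove_symm_apply, Fin.prod_univ_succ, Fin.zero_succAbove]
      simp_rw [key]
      rw [lintegral_prod_mul (f := g) (g := fun v : Fin n → E => ∏ i, g (v i)) hg.aemeasurable
        ((Finset.measurable_prod Finset.univ fun i _ =>
          hg.comp (measurable_pi_apply i)).aemeasurable), ih, pow_succ]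
      ring

end Stmt1Aux

/-- α-sub-exponential tails of the bootstrap estimate:
in the linear regression setup with i.i.d. `α`-sub-exponential residuals, and with the bootstrap
residual vector obtained by resampling (with replacement, via uniformly random independent
indices `Idx`) the centered estimated residuals, there is `η > 0` with
`E exp(η ‖β̂*_n‖^α) < ∞`. -/
theorem stmt1 (n p : ℕ) (X : Matrix (Fin n) (Fin p) ℝ) (hX : X.rank = p)
    (Ω : Type) [MeasurableSpace Ω] (P : Measure Ω) [IsProbabilityMeasure P]
    (F : Measure ℝ) [IsProbabilityMeasure F] (σ : ℝ)
    (hmean : ∫ x, x ∂F = 0) (hvar : ∫ x, x ^ 2 ∂F = σ ^ 2)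
    (α K : ℝ) (hα : 2 < α) (hK : 0 < K)
    (htail : ∀ t : ℝ, 0 ≤ t →
      F {x : ℝ | t < |x|} ≤ ENNReal.ofReal (2 * Real.exp (-(t ^ α / K ^ α))))
    (β : Fin p → ℝ) (ε : Ω → Fin n → ℝ) (Idx : Ω → Fin n → Fin n)
    (hlaw : Measure.map (fun ω => (ε ω, Idx ω)) P
      = (Measure.pi fun _ : Fin n => F).prod (Measure.pi fun _ : Fin n => unifFin n)) :
    ∃ η : ℝ, 0 < η ∧
      (let y : Ω → Fin n → ℝ := fun ω => X.mulVec β + ε ω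
       let bhat : Ω → Fin p → ℝ := fun ω => (olsM X).mulVec (y ω)
       let rhat : Ω → Fin n → ℝ := fun ω => y ω - X.mulVec (bhat ω)
       let εstar : Ω → Fin n → ℝ := fun ω j => center (rhat ω) (Idx ω j)
       let bstar : Ω → Fin p → ℝ := fun ω => (olsM X).mulVec (X.mulVec (bhat ω) + εstar ω)
       ∫⁻ ω, ENNReal.ofReal (Real.exp (η * euclNorm (bstar ω) ^ α)) ∂P < ⊤) := by
  classical
  have hα0 : (0:ℝ) ≤ α := by linarith
  rcases Nat.eq_zero_or_pos p with hp | hp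
  · subst hp
    refine ⟨1, one_pos, ?_⟩
    show ∫⁻ ω, ENNReal.ofReal
      (Real.exp (1 * euclNorm (Stmt1Aux.bstarFun X β (ε ω) (Idx ω)) ^ α)) ∂P < ⊤
    have hz : ∀ ω : Ω,
        (1:ℝ) * euclNorm (Stmt1Aux.bstarFun X β (ε ω) (Idx ω)) ^ α = 0 := by
      intro ω
      have h0 : euclNorm (Stmt1Aux.bstarFun X β (ε ω) (Idx ω)) = 0 := by
        simp [euclNorm]
      rw [h0, Real.zero_rpow (by positivity : α ≠ 0), mul_zero]
    simp only [hz, Real.exp_zero, ENNReal.ofReal_one, lintegral_one, measure_univ]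
    exact ENNReal.one_lt_top
  · have hn : 0 < n := by
      have h1 : X.rank ≤ n := by simpa using Matrix.rank_le_card_height X
      have h2 : p ≤ n := hX ▸ h1
      omega
    obtain ⟨C0, C1, hC0, hC1, hCb⟩ := Stmt1Aux.bstar_bound hn X β
    obtain ⟨D0, D1, hD0, hD1, hDb⟩ := Stmt1Aux.pow_bound hn α (by linarith) C0 C1 hC0 hC1
    have h2α : (0:ℝ) < 2 ^ α := Real.rpow_pos_of_pos two_pos α
    have hKα : (0:ℝ) < K ^ α := Real.rpow_pos_of_pos hK α
    set T : ℝ := (2 * (2 ^ α * K ^ α))⁻¹ / 2 ^ α with hT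
    have hT0 : 0 < T := div_pos (inv_pos.2 (by nlinarith)) h2α
    set η : ℝ := T / (D1 + 1) with hη
    have hη0 : 0 < η := div_pos hT0 (by linarith)
    refine ⟨η, hη0, ?_⟩
    show ∫⁻ ω, ENNReal.ofReal
      (Real.exp (η * euclNorm (Stmt1Aux.bstarFun X β (ε ω) (Idx ω)) ^ α)) ∂P < ⊤
    set c : ℝ := η * D1 with hcdef
    have hc0 : 0 ≤ c := mul_nonneg hη0.le hD1
    have hc : c * 2 ^ α ≤ (2 * (2 ^ α * K ^ α))⁻¹ := by
      have h1 : c ≤ T := by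
        rw [hcdef, hη, div_mul_eq_mul_div, div_le_iff₀ (by linarith)]
        nlinarith
      calc c * 2 ^ α ≤ T * 2 ^ α := mul_le_mul_of_nonneg_right h1 h2α.le
        _ = (2 * (2 ^ α * K ^ α))⁻¹ := by rw [hT]; field_simp
    set g : ℝ → ℝ≥0∞ := fun x => ENNReal.ofReal (Real.exp (c * |x| ^ α)) with hgdef
    have hg : Measurable g := by
      apply ENNReal.measurable_ofReal.comp
      exact (Real.continuous_exp.comp (continuous_const.mul
        (continuous_abs.rpow_const fun x => Or.inr hα0))).measurable
    have hpt : ∀ ω : Ω, ENNReal.ofReal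
        (Real.exp (η * euclNorm (Stmt1Aux.bstarFun X β (ε ω) (Idx ω)) ^ α))
        ≤ ENNReal.ofReal (Real.exp (η * D0)) * ∏ i, g (ε ω i) := by
      intro ω
      have h1 : euclNorm (Stmt1Aux.bstarFun X β (ε ω) (Idx ω)) ^ α
          ≤ D0 + D1 * ∑ i, |ε ω i| ^ α :=
        le_trans (Real.rpow_le_rpow (Stmt1Aux.euclNorm_nonneg _) (hCb (ε ω) (Idx ω)) hα0)
          (hDb (ε ω))
      have h2 : η * euclNorm (Stmt1Aux.bstarFun X β (ε ω) (Idx ω)) ^ α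
          ≤ η * D0 + ∑ i, c * |ε ω i| ^ α := by
        calc η * euclNorm (Stmt1Aux.bstarFun X β (ε ω) (Idx ω)) ^ α
            ≤ η * (D0 + D1 * ∑ i, |ε ω i| ^ α) := mul_le_mul_of_nonneg_left h1 hη0.le
          _ = η * D0 + ∑ i, c * |ε ω i| ^ α := by rw [← Finset.mul_sum, hcdef]; ring
      calc ENNReal.ofReal (Real.exp (η * euclNorm (Stmt1Aux.bstarFun X β (ε ω) (Idx ω)) ^ α))
          ≤ ENNReal.ofReal (Real.exp (η * D0 + ∑ i, c * |ε ω i| ^ α)) :=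
            ENNReal.ofReal_le_ofReal (Real.exp_le_exp.2 h2)
        _ = ENNReal.ofReal (Real.exp (η * D0) * ∏ i, Real.exp (c * |ε ω i| ^ α)) := by
            rw [Real.exp_add, Real.exp_sum]
        _ = ENNReal.ofReal (Real.exp (η * D0)) * ∏ i, g (ε ω i) := by
            rw [ENNReal.ofReal_mul (Real.exp_nonneg _),
              ENNReal.ofReal_prod_of_nonneg (fun i _ => Real.exp_nonneg _)]
    haveI hunif : IsProbabilityMeasure (unifFin n) := by
      constructor
      rw [unifFin, empMeasure, Measure.smul_apply]
      have h : (∑ i : Fin n, Measure.dirac ((fun i : Fin n => i) i)) Set.univ = (n : ℝ≥0∞) := by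
        simp [Measure.finset_sum_apply]
      rw [h, smul_eq_mul,
        ENNReal.inv_mul_cancel (by exact_mod_cast hn.ne' : (n:ℝ≥0∞) ≠ 0) (ENNReal.natCast_ne_top n)]
    have hpair : AEMeasurable (fun ω => (ε ω, Idx ω)) P := by
      by_contra h
      rw [Measure.map_of_not_aemeasurable h] at hlaw
      have h0 := congrArg (fun m : Measure ((Fin n → ℝ) × (Fin n → Fin n)) => m Set.univ) hlaw
      simp [measure_univ] at h0
    have hε : AEMeasurable ε P := measurable_fst.comp_aemeasurable hpair
    have hmap : P.map ε = Measure.pi fun _ : Fin n => F := by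
      have h1 : P.map ε = Measure.map Prod.fst (P.map (fun ω => (ε ω, Idx ω))) :=
        (AEMeasurable.map_map_of_aemeasurable measurable_fst.aemeasurable hpair).symm
      rw [h1, hlaw, Measure.map_fst_prod, measure_univ, one_smul]
    have hG : Measurable fun v : Fin n → ℝ => ∏ i, g (v i) :=
      Finset.measurable_prod _ fun i _ => hg.comp (measurable_pi_apply i)
    have hint : ∫⁻ x, g x ∂F < ⊤ := Stmt1Aux.tail_lint F α K (by linarith) hK htail c hc0 hc
    have key : ∫⁻ ω, ∏ i, g (ε ω i) ∂P = (∫⁻ x, g x ∂F) ^ n := by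
      have h1 : ∫⁻ v, ∏ i, g (v i) ∂(P.map ε) = ∫⁻ ω, ∏ i, g (ε ω i) ∂P :=
        lintegral_map' hG.aemeasurable hε
      rw [← h1, hmap, Stmt1Aux.lintegral_pi_prod F g hg n]
    calc ∫⁻ ω, ENNReal.ofReal
          (Real.exp (η * euclNorm (Stmt1Aux.bstarFun X β (ε ω) (Idx ω)) ^ α)) ∂P
        ≤ ∫⁻ ω, ENNReal.ofReal (Real.exp (η * D0)) * ∏ i, g (ε ω i) ∂P := lintegral_mono hpt
      _ = ENNReal.ofReal (Real.exp (η * D0)) * ∫⁻ ω, ∏ i, g (ε ω i) ∂P :=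
          lintegral_const_mul' _ _ ENNReal.ofReal_ne_top
      _ = ENNReal.ofReal (Real.exp (η * D0)) * (∫⁻ x, g x ∂F) ^ n := by rw [key]
      _ < ⊤ := ENNReal.mul_lt_top ENNReal.ofReal_lt_top (ENNReal.pow_lt_top hint)
end
end

section
/- In the linear regression setup, let F_n be the empirical distribution of the true residuals ε_{n1},...,ε_{nn} and F̂_n the empirical distribution of the centered estimated residuals. Then the 2-Wasserstein distance satisfies d₂(F_n, F̂_n) ≤ (1/√n) ‖((1/n) 𝟙𝟙ᵀ + Π)^{1/2} ε_n‖₂, where Π = X_n(X_nᵀX_n)⁻¹X_nᵀ ∈ ℝ^{n×n} is the orthogonal projection onto the column space of X_n and 𝟙 ∈ ℝⁿ is the all-ones vector. -/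
open MeasureTheory Matrix
open scoped ENNReal NNReal BigOperators

noncomputable section

/-- Square root of a positive semidefinite matrix: the definition `Matrix.PosSemidef.sqrt`
of the older Mathlib, which has since been removed. -/
def Matrix.PosSemidef.sqrt {m : Type*} [Fintype m] [DecidableEq m]
    {A : Matrix m m ℝ} (hA : A.PosSemidef) : Matrix m m ℝ :=
  hA.1.eigenvectorUnitary.1 * diagonal ((fun x : ℝ => Real.sqrt x) ∘ hA.1.eigenvalues) *
    (star hA.1.eigenvectorUnitary : Matrix m m ℝ)

/-!
Couple the `i`-th true residual `εᵢ` with the `i`-th centered estimated residual `ĉᵢ`: this gives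
`d₂(F_n, F̂_n)² ≤ (1/n) ‖ε - ĉ‖²`. With `Π` the hat matrix and `Q = (1/n)𝟙𝟙ᵀ`, the estimated
residuals are `(I - Π)ε` and centering applies `I - Q`, so `ε - ĉ = (Π + Q - QΠ)ε`. As `Π` and `Q`
are symmetric idempotents, `(Π + Q - QΠ)ᵀ(Π + Q - QΠ) = Π + Q - (QΠ)ᵀ(QΠ)`, hence
`‖ε - ĉ‖² = εᵀ(Q + Π)ε - ‖QΠε‖² ≤ ‖(Q + Π)^{1/2} ε‖²`.
-/

namespace Matrix

variable {ι : Type*} [Fintype ι]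

lemma mulVec_dotProduct_mulVec_self {R : Type*} [CommSemiring R] (A : Matrix ι ι R) (v : ι → R) :
    A *ᵥ v ⬝ᵥ A *ᵥ v = v ⬝ᵥ (Aᵀ * A) *ᵥ v := by
  rw [← mulVec_mulVec, dotProduct_transpose_mulVec]

lemma isUnit_det_of_rank_eq_card [DecidableEq ι] {K : Type*} [Field K] {A : Matrix ι ι K}
    (h : A.rank = Fintype.card ι) : IsUnit A.det := by
  have hrange : LinearMap.range A.mulVecLin = ⊤ :=
    Submodule.eq_top_of_finrank_eq (by rw [← rank, h, Module.finrank_fintype_fun_eq_card])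
  rw [← isUnit_iff_isUnit_det, ← mulVec_surjective_iff_isUnit]
  exact LinearMap.range_eq_top.mp hrange

lemma gram_add_sub_mul_add_gram_mul {R : Type*} [CommRing R] {P Q : Matrix ι ι R}
    (hP : P.IsSymm) (hPP : IsIdempotentElem P) (hQ : Q.IsSymm) (hQQ : IsIdempotentElem Q) :
    (P + Q - Q * P)ᵀ * (P + Q - Q * P) + (Q * P)ᵀ * (Q * P) = P + Q := by
  have hQQP : Q * (Q * P) = Q * P := by rw [← Matrix.mul_assoc, hQQ.eq]
  rw [transpose_sub, transpose_add, transpose_mul, hP.eq, hQ.eq]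
  simp only [Matrix.mul_sub, Matrix.sub_mul, Matrix.mul_add, Matrix.add_mul, Matrix.mul_assoc,
    hPP.eq, hQQ.eq, hQQP]
  abel

lemma mulVec_dotProduct_self_le_of_isSymm_of_isIdempotentElem {P Q : Matrix ι ι ℝ}
    (hP : P.IsSymm) (hPP : IsIdempotentElem P) (hQ : Q.IsSymm) (hQQ : IsIdempotentElem Q)
    (v : ι → ℝ) : (P + Q - Q * P) *ᵥ v ⬝ᵥ (P + Q - Q * P) *ᵥ v ≤ v ⬝ᵥ (P + Q) *ᵥ v := by
  conv_rhs => rw [← gram_add_sub_mul_add_gram_mul hP hPP hQ hQQ, add_mulVec, dotProduct_add,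
    ← mulVec_dotProduct_mulVec_self, ← mulVec_dotProduct_mulVec_self]
  exact le_add_of_nonneg_right (by simpa using dotProduct_self_star_nonneg ((Q * P) *ᵥ v))

namespace PosSemidef

variable [DecidableEq ι] {A : Matrix ι ι ℝ} (hA : A.PosSemidef)

lemma sqrt_mul_self : hA.sqrt * hA.sqrt = A := by
  set U : Matrix ι ι ℝ := hA.1.eigenvectorUnitary.1
  set D := diagonal ((fun x : ℝ => Real.sqrt x) ∘ hA.1.eigenvalues)
  have hU : star U * U = 1 := Unitary.star_mul_self_of_mem hA.1.eigenvectorUnitary.2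
  have hD : D * D = diagonal hA.1.eigenvalues := by
    rw [diagonal_mul_diagonal]
    exact congrArg diagonal (funext fun i => Real.mul_self_sqrt (hA.eigenvalues_nonneg i))
  calc hA.sqrt * hA.sqrt = U * (D * (star U * U) * D) * star U := by
        simp only [Matrix.PosSemidef.sqrt, U, D, Matrix.mul_assoc]
    _ = A := by
      rw [hU, Matrix.mul_one, hD]
      conv_rhs => rw [hA.1.spectral_theorem]
      simp [U, Unitary.conjStarAlgAut_apply]

lemma transpose_sqrt : hA.sqrtᵀ = hA.sqrt := by
  simp only [Matrix.PosSemidef.sqrt, transpose_mul, diagonal_transpose, star_eq_conjTranspose,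
    conjTranspose_eq_transpose_of_trivial, transpose_transpose, Matrix.mul_assoc]

lemma sqrt_mulVec_dotProduct_self (v : ι → ℝ) :
    hA.sqrt *ᵥ v ⬝ᵥ hA.sqrt *ᵥ v = v ⬝ᵥ A *ᵥ v := by
  rw [mulVec_dotProduct_mulVec_self, transpose_sqrt, sqrt_mul_self]

end PosSemidef

end Matrix

section Empirical

variable {E : Type*} [MeasurableSpace E] {k : ℕ}

lemma map_empMeasure {F : Type*} [MeasurableSpace F] (pts : Fin k → E) {g : E → F}
    (hg : Measurable g) : (empMeasure pts).map g = empMeasure (g ∘ pts) := by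
  rw [empMeasure, empMeasure, ← Measure.mapₗ_apply_of_measurable hg, map_smul, map_sum]
  simp only [Measure.mapₗ_apply_of_measurable hg, Measure.map_dirac' hg, Function.comp_apply]

lemma integral_empMeasure [MeasurableSingletonClass E] (pts : Fin k → E) (f : E → ℝ) :
    ∫ x, f x ∂(empMeasure pts) = (k : ℝ)⁻¹ * ∑ i, f (pts i) := by
  rw [empMeasure, integral_smul_measure,
    integral_finsetSum_measure fun i _ => integrable_dirac (by simp)]
  simp [integral_dirac, ENNReal.toReal_inv]

end Empirical

lemma wassR_le_of_map_fst_of_map_snd {q : ℝ} {μ ν : Measure ℝ} (γ : Measure (ℝ × ℝ))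
    (hμ : γ.map Prod.fst = μ) (hν : γ.map Prod.snd = ν) :
    wassR q μ ν ≤ (∫ z, |z.1 - z.2| ^ q ∂γ) ^ (1 / q) := by
  refine csInf_le ⟨0, ?_⟩ ⟨γ, hμ, hν, rfl⟩
  rintro _ ⟨γ', -, -, rfl⟩
  exact Real.rpow_nonneg (integral_nonneg fun z => Real.rpow_nonneg (abs_nonneg _) _) _

lemma euclNorm_eq_sqrt_dotProduct {d : ℕ} (v : Fin d → ℝ) : euclNorm v = √(v ⬝ᵥ v) := by
  simp only [euclNorm, dotProduct, sq]

/-- Coupling the `i`-th atoms of two empirical measures. -/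
lemma wassR_two_empMeasure_le {k : ℕ} (a b : Fin k → ℝ) :
    wassR 2 (empMeasure a) (empMeasure b) ≤ (√k)⁻¹ * euclNorm (a - b) := by
  let γ := empMeasure fun i => (a i, b i)
  calc wassR 2 (empMeasure a) (empMeasure b)
      ≤ (∫ z, |z.1 - z.2| ^ (2 : ℝ) ∂γ) ^ (1 / (2 : ℝ)) :=
        wassR_le_of_map_fst_of_map_snd γ (map_empMeasure _ measurable_fst)
          (map_empMeasure _ measurable_snd)
    _ = (√k)⁻¹ * euclNorm (a - b) := by
      simp only [γ, integral_empMeasure, Real.rpow_two, sq_abs, ← Real.sqrt_eq_rpow, euclNorm,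
        Pi.sub_apply]
      rw [Real.sqrt_mul (by positivity), Real.sqrt_inv]

section Regression

variable {n p : ℕ}

def meanMat (n : ℕ) : Matrix (Fin n) (Fin n) ℝ := (n : ℝ)⁻¹ • Matrix.of fun _ _ => 1

lemma meanMat_isSymm : (meanMat n).IsSymm := by
  ext i j
  simp [meanMat]

lemma isIdempotentElem_meanMat : IsIdempotentElem (meanMat n) := by
  ext i j
  have hn : (n : ℝ) ≠ 0 := Nat.cast_ne_zero.mpr (Fin.pos i).ne'
  simp [meanMat, Matrix.mul_apply]
  field_simp

lemma center_eq_sub_meanMat_mulVec (v : Fin n → ℝ) : center v = v - meanMat n *ᵥ v := by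
  ext i
  simp [center, meanMat, mulVec, dotProduct, Finset.mul_sum, div_eq_inv_mul]

lemma sub_center_sub_mulVec (P : Matrix (Fin n) (Fin n) ℝ) (v : Fin n → ℝ) :
    v - center (v - P *ᵥ v) = (P + meanMat n - meanMat n * P) *ᵥ v := by
  rw [center_eq_sub_meanMat_mulVec, mulVec_sub, sub_mulVec, add_mulVec, ← mulVec_mulVec]
  abel

lemma covMat_eq_projMat_add_meanMat (X : Matrix (Fin n) (Fin p) ℝ) :
    covMat X = projMat X + meanMat n :=
  add_comm _ _

lemma projMat_isSymm (X : Matrix (Fin n) (Fin p) ℝ) : (projMat X).IsSymm := by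
  rw [IsSymm, projMat, transpose_mul, transpose_mul, transpose_transpose, transpose_nonsing_inv,
    transpose_mul, transpose_transpose, Matrix.mul_assoc]

variable {X : Matrix (Fin n) (Fin p) ℝ}

lemma isUnit_det_transpose_mul_self (hX : X.rank = p) : IsUnit (Xᵀ * X).det :=
  isUnit_det_of_rank_eq_card (by rw [rank_transpose_mul_self, hX, Fintype.card_fin])

lemma projMat_mul_self_eq (hX : X.rank = p) : projMat X * X = X := by
  rw [projMat, Matrix.mul_assoc,
    Matrix.nonsing_inv_mul_cancel_right _ _ (isUnit_det_transpose_mul_self hX)]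

lemma isIdempotentElem_projMat (hX : X.rank = p) : IsIdempotentElem (projMat X) := by
  rw [IsIdempotentElem]
  nth_rewrite 2 [projMat]
  rw [Matrix.mul_assoc X, ← Matrix.mul_assoc, projMat_mul_self_eq hX, ← Matrix.mul_assoc,
    projMat]

lemma ols_residual_eq (hX : X.rank = p) (β : Fin p → ℝ) (ε : Fin n → ℝ) :
    X *ᵥ β + ε - X *ᵥ (olsM X *ᵥ (X *ᵥ β + ε)) = ε - projMat X *ᵥ ε := by
  rw [mulVec_mulVec, olsM, ← Matrix.mul_assoc, ← projMat, mulVec_add, mulVec_mulVec,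
    projMat_mul_self_eq hX]
  abel

end Regression

/-- Lemma 3 of the paper:
`d₂(F_n, F̂_n) ≤ (1/√n) ‖((1/n)𝟙𝟙ᵀ + Π)^{1/2} ε_n‖₂`, where `F_n` is the empirical distribution
of the true residuals, `F̂_n` the centered empirical distribution of the estimated residuals, and
`Π = X(XᵀX)⁻¹Xᵀ`. -/
theorem stmt8 (n p : ℕ) (X : Matrix (Fin n) (Fin p) ℝ) (hX : X.rank = p)
    (hPSD : (covMat X).PosSemidef) (β : Fin p → ℝ) (ε : Fin n → ℝ) :
    let y := X.mulVec β + ε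
    let bhat := (olsM X).mulVec y
    let rhat := y - X.mulVec bhat
    wassR 2 (empMeasure ε) (empMeasure (center rhat)) ≤
      (Real.sqrt n)⁻¹ * euclNorm (hPSD.sqrt.mulVec ε) := by
  intro y bhat rhat
  have hdiff : ε - center rhat = (projMat X + meanMat n - meanMat n * projMat X) *ᵥ ε := by
    rw [← sub_center_sub_mulVec, ← ols_residual_eq hX β ε]
  calc wassR 2 (empMeasure ε) (empMeasure (center rhat))
      ≤ (√n)⁻¹ * euclNorm (ε - center rhat) := wassR_two_empMeasure_le _ _
    _ ≤ (√n)⁻¹ * euclNorm (hPSD.sqrt *ᵥ ε) := by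
      rw [euclNorm_eq_sqrt_dotProduct, euclNorm_eq_sqrt_dotProduct,
        hPSD.sqrt_mulVec_dotProduct_self, covMat_eq_projMat_add_meanMat, hdiff]
      gcongr
      exact mulVec_dotProduct_self_le_of_isSymm_of_isIdempotentElem (projMat_isSymm X)
        (isIdempotentElem_projMat hX) meanMat_isSymm isIdempotentElem_meanMat ε
end
end

section
/- Consider the distributionally robust optimization problem: minimize f(x) subject to sup over P_{β̂_n} ∈ 𝒫 of ρ(a_jᵀ(β̂_n)x − b_j(β̂_n)) ≤ Δ_j for j = 1,…,m, where 𝒫 = {μ : d₁(Φ*_k(F̂_n), μ) ≤ ε} is the Wasserstein ball of radius ε around the bootstrap empirical distribution, ρ is any law-invariant risk functional (a functional of the distribution of its argument), and suppose ε is chosen so that P(d₁(Φ(F), Φ*_k(F̂_n)) ≥ ε) ≤ δ for the true distribution Φ(F) of β̂_n. Then, if the problem is feasible with optimizer x̂*_{n,k}, for each j = 1,…,m: P(ρ(a_jᵀ(β̂_n) x̂*_{n,k} − b_j(β̂_n)) ≤ Δ_j) ≥ 1 − δ, where ρ is evaluated under the true distribution Φ(F) of β̂_n. -/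
open MeasureTheory Matrix
open scoped ENNReal NNReal BigOperators

noncomputable section

/-! Outside the event `d₁(Φ(F), Φ*_k(F̂_n)) ≥ εr`, of probability at most `δ`, the true law
`Φ(F)` lies in the ambiguity ball, so every robustly feasible decision, in particular `x̂*`, meets
the risk limits under `Φ(F)`. That `Φ(F)` is a probability measure, and hence a competitor in the
ball, comes from `β̂_n` being a continuous function of the noise, whose law is a probability
measure. -/

lemma isProbabilityMeasure_empMeasure {E : Type*} [MeasurableSpace E] {k : ℕ} [NeZero k]
    (pts : Fin k → E) : IsProbabilityMeasure (empMeasure pts) := by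
  constructor
  simp [empMeasure, Measure.finsetSum_apply,
    ENNReal.inv_mul_cancel (NeZero.ne (k : ℝ≥0∞)) (ENNReal.natCast_ne_top k)]

instance isProbabilityMeasure_unifFin (n : ℕ) [NeZero n] : IsProbabilityMeasure (unifFin n) :=
  isProbabilityMeasure_empMeasure _

instance isProbabilityMeasure_pi_unifFin (n : ℕ) :
    IsProbabilityMeasure (Measure.pi fun _ : Fin n => unifFin n) := by
  rcases n with _ | n
  · rw [Measure.pi_of_empty]
    infer_instance
  · infer_instance

lemma euclNorm_sub_comm {d : ℕ} (x y : Fin d → ℝ) : euclNorm (x - y) = euclNorm (y - x) := by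
  simp only [euclNorm, ← neg_sub y x, Pi.neg_apply, neg_sq]

lemma wassE_comm (q : ℝ) {d : ℕ} (μ ν : Measure (Fin d → ℝ)) :
    wassE q μ ν = wassE q ν μ := by
  unfold wassE
  congr 1
  ext r
  constructor <;>
  · rintro ⟨γ, hfst, hsnd, rfl⟩
    refine ⟨γ.map MeasurableEquiv.prodComm, ?_, ?_, ?_⟩
    · rwa [Measure.map_map measurable_fst MeasurableEquiv.prodComm.measurable]
    · rwa [Measure.map_map measurable_snd MeasurableEquiv.prodComm.measurable]
    · rw [integral_map_equiv]
      congr 2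
      funext z
      exact congrArg (· ^ q) (euclNorm_sub_comm z.1 z.2)

lemma ofReal_one_sub_le_measure_of_compl_subset {Ω : Type*} [MeasurableSpace Ω]
    {P : Measure Ω} [IsProbabilityMeasure P] {B G : Set Ω} {δ : ℝ} (hδ : 0 ≤ δ)
    (hB : P B ≤ ENNReal.ofReal δ) (hBG : Bᶜ ⊆ G) : ENNReal.ofReal (1 - δ) ≤ P G := by
  have hcover : (1 : ℝ≥0∞) ≤ P B + P G :=
    calc (1 : ℝ≥0∞) = P (B ∪ Bᶜ) := by rw [Set.union_compl_self, measure_univ]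
      _ ≤ P (B ∪ G) := measure_mono (Set.union_subset_union_right B hBG)
      _ ≤ P B + P G := measure_union_le B G
  calc ENNReal.ofReal (1 - δ) = 1 - ENNReal.ofReal δ := by
        rw [ENNReal.ofReal_sub _ hδ, ENNReal.ofReal_one]
    _ ≤ 1 - P B := tsub_le_tsub_left hB 1
    _ ≤ P G := tsub_le_iff_left.mpr hcover

theorem stmt16_general (n p k d m : ℕ) (X : Matrix (Fin n) (Fin p) ℝ)
    (Ω : Type*) [MeasurableSpace Ω] (P : Measure Ω) [IsProbabilityMeasure P]
    (F : Measure ℝ) [IsProbabilityMeasure F]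
    (β : Fin p → ℝ) (ε : Ω → Fin n → ℝ) (Idx : Ω → Fin k → Fin n → Fin n)
    (hlaw : Measure.map (fun ω => (ε ω, Idx ω)) P
      = (Measure.pi fun _ : Fin n => F).prod
          (Measure.pi fun _ : Fin k => Measure.pi fun _ : Fin n => unifFin n))
    -- the optimization data: convex objective, affine constraint data, risk limits
    (f : (Fin d → ℝ) → ℝ)
    (a : Fin m → (Fin p → ℝ) → (Fin d → ℝ)) (b : Fin m → (Fin p → ℝ) → ℝ)
    (Δ : Fin m → ℝ)
    -- a law-invariant risk functional: a functional of the distribution of the random variable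
    (ρ : Measure ℝ → ℝ)
    (εr δ : ℝ) (hδ : 0 < δ) :
    let y : Ω → Fin n → ℝ := fun ω => X.mulVec β + ε ω
    let bhat : Ω → Fin p → ℝ := fun ω => (olsM X).mulVec (y ω)
    let rhat : Ω → Fin n → ℝ := fun ω => y ω - X.mulVec (bhat ω)
    let bstar : Ω → Fin k → Fin p → ℝ := fun ω i =>
      (olsM X).mulVec (X.mulVec (bhat ω) + fun j => center (rhat ω) (Idx ω i j))
    let Phistar : Ω → Measure (Fin p → ℝ) := fun ω => empMeasure (bstar ω)
    let PhiF : Measure (Fin p → ℝ) := Measure.map bhat P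
    let g : Fin m → (Fin d → ℝ) → (Fin p → ℝ) → ℝ := fun j x βv => a j βv ⬝ᵥ x - b j βv
    -- feasibility for the distributionally robust constraints with bootstrap ambiguity set
    let Feas : Ω → (Fin d → ℝ) → Prop := fun ω x => ∀ j, ∀ μ : Measure (Fin p → ℝ),
      IsProbabilityMeasure μ → wassE 1 (Phistar ω) μ ≤ εr → ρ (μ.map (g j x)) ≤ Δ j
    -- the radius is chosen so that the ambiguity set contains `Φ(F)` with probability `≥ 1 − δ`
    P {ω | εr ≤ wassE 1 PhiF (Phistar ω)} ≤ ENNReal.ofReal δ →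
    -- `xhat` is an optimizer of the distributionally robust program
    ∀ xhat : Ω → Fin d → ℝ, (∀ ω, Feas ω (xhat ω)) →
      (∀ ω x, Feas ω x → f (xhat ω) ≤ f x) →
      ∀ j, ENNReal.ofReal (1 - δ) ≤ P {ω | ρ (PhiF.map (g j (xhat ω))) ≤ Δ j} := by
  intro y bhat rhat bstar Phistar PhiF g Feas hrad xhat hfeas _ j
  have hnoise : AEMeasurable (fun ω => (ε ω, Idx ω)) P :=
    .of_map_ne_zero (hlaw ▸ IsProbabilityMeasure.ne_zero _)
  have hbhat : AEMeasurable bhat P :=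
    (show Continuous fun v => (olsM X).mulVec (X.mulVec β + v) by fun_prop).measurable
      |>.comp_aemeasurable (measurable_fst.comp_aemeasurable hnoise)
  have hPhiF : IsProbabilityMeasure PhiF := Measure.isProbabilityMeasure_map hbhat
  refine ofReal_one_sub_le_measure_of_compl_subset hδ.le hrad fun ω hω => ?_
  exact hfeas ω j PhiF hPhiF ((wassE_comm 1 _ _).le.trans (le_of_not_ge hω))

/-- Corollary 1 of the paper, out-of-sample safety guarantee:
if the Wasserstein radius `εr` satisfies `P(d₁(Φ(F), Φ*_k(F̂_n)) ≥ εr) ≤ δ` and `x̂*` is an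
optimizer of the distributionally robust problem with ambiguity set
`𝒫(ω) = {μ : d₁(Φ*_k(F̂_n)(ω), μ) ≤ εr}` and law-invariant risk functional `ρ`, then for each `j`,
`P(ρ_{Φ(F)}(a_jᵀ(β̂_n)x̂* − b_j(β̂_n)) ≤ Δ_j) ≥ 1 − δ`. -/
theorem stmt16 (n p k d m : ℕ) (X : Matrix (Fin n) (Fin p) ℝ) (hX : X.rank = p)
    (Ω : Type*) [MeasurableSpace Ω] (P : Measure Ω) [IsProbabilityMeasure P]
    (F : Measure ℝ) [IsProbabilityMeasure F]
    (β : Fin p → ℝ) (ε : Ω → Fin n → ℝ) (Idx : Ω → Fin k → Fin n → Fin n)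
    (hlaw : Measure.map (fun ω => (ε ω, Idx ω)) P
      = (Measure.pi fun _ : Fin n => F).prod
          (Measure.pi fun _ : Fin k => Measure.pi fun _ : Fin n => unifFin n))
    -- the optimization data: convex objective, affine constraint data, risk limits
    (f : (Fin d → ℝ) → ℝ) (hf : ConvexOn ℝ Set.univ f)
    (a : Fin m → (Fin p → ℝ) → (Fin d → ℝ)) (b : Fin m → (Fin p → ℝ) → ℝ)
    (ha : ∀ j, ∃ (A : Matrix (Fin d) (Fin p) ℝ) (a0 : Fin d → ℝ),
      ∀ βv, a j βv = A.mulVec βv + a0)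
    (hb : ∀ j, ∃ (bv : Fin p → ℝ) (b0 : ℝ), ∀ βv, b j βv = bv ⬝ᵥ βv + b0)
    (Δ : Fin m → ℝ)
    -- a law-invariant risk functional: a functional of the distribution of the random variable
    (ρ : Measure ℝ → ℝ)
    (εr δ : ℝ) (hδ : 0 < δ) (hδ1 : δ < 1) (hεr : 0 < εr) :
    let y : Ω → Fin n → ℝ := fun ω => X.mulVec β + ε ω
    let bhat : Ω → Fin p → ℝ := fun ω => (olsM X).mulVec (y ω)
    let rhat : Ω → Fin n → ℝ := fun ω => y ω - X.mulVec (bhat ω)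
    let bstar : Ω → Fin k → Fin p → ℝ := fun ω i =>
      (olsM X).mulVec (X.mulVec (bhat ω) + fun j => center (rhat ω) (Idx ω i j))
    let Phistar : Ω → Measure (Fin p → ℝ) := fun ω => empMeasure (bstar ω)
    let PhiF : Measure (Fin p → ℝ) := Measure.map bhat P
    let g : Fin m → (Fin d → ℝ) → (Fin p → ℝ) → ℝ := fun j x βv => a j βv ⬝ᵥ x - b j βv
    -- feasibility for the distributionally robust constraints with bootstrap ambiguity set
    let Feas : Ω → (Fin d → ℝ) → Prop := fun ω x => ∀ j, ∀ μ : Measure (Fin p → ℝ),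
      IsProbabilityMeasure μ → wassE 1 (Phistar ω) μ ≤ εr → ρ (μ.map (g j x)) ≤ Δ j
    -- the radius is chosen so that the ambiguity set contains `Φ(F)` with probability `≥ 1 − δ`
    P {ω | εr ≤ wassE 1 PhiF (Phistar ω)} ≤ ENNReal.ofReal δ →
    -- `xhat` is an optimizer of the distributionally robust program
    ∀ xhat : Ω → Fin d → ℝ, (∀ ω, Feas ω (xhat ω)) →
      (∀ ω x, Feas ω x → f (xhat ω) ≤ f x) →
      ∀ j, ENNReal.ofReal (1 - δ) ≤ P {ω | ρ (PhiF.map (g j (xhat ω))) ≤ Δ j} :=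
  stmt16_general n p k d m X Ω P F β ε Idx hlaw f a b Δ ρ εr δ hδ
end
end
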